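/- arXiv:2502.19523 — 7 statements merged into one kernel-verified Lean document; each statement's English description precedes it below -/
import Mathlib

section
/- For integers n ≥ k > 0 and any integer s, let T(n,k,s) denote the number of k-element subsets of Z/nZ summing to s mod n; then T(n,k,s) depends only on the residue class of s modulo gcd(n,k). -/
noncomputable def T (n k : ℕ) (s : ℤ) : ℕ :=
  Nat.card {Q : Finset (ZMod n) // Q.card = k ∧ (∑ a ∈ Q, a) = (s : ZMod n)}

lemma shiftT (n k : ℕ) (c : ZMod n) (u v : ZMod n) (huv : v = u + k • c) :
    Nat.card {Q : Finset (ZMod n) // Q.card = k ∧ (∑ a ∈ Q, a) = u}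
      = Nat.card {Q : Finset (ZMod n) // Q.card = k ∧ (∑ a ∈ Q, a) = v} := by
  subst huv
  apply Nat.card_congr
  refine (Equiv.addRight c).finsetCongr.subtypeEquiv ?_
  intro Q
  simp only [Equiv.finsetCongr_apply, Finset.card_map, Finset.sum_map,
    Equiv.coe_toEmbedding, Equiv.coe_addRight, Finset.sum_add_distrib,
    Finset.sum_const]
  constructor
  · rintro ⟨h1, h2⟩
    exact ⟨h1, by rw [h2, h1]⟩
  · rintro ⟨h1, h2⟩
    refine ⟨h1, ?_⟩
    rw [h1] at h2
    exact add_right_cancel h2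

/-- `T n k s` depends only on the residue class of `s` modulo `gcd(n,k)`. -/
theorem stmt_0 (n k : ℕ) (hk : 0 < k) (hkn : k ≤ n) (s t : ℤ)
    (h : s ≡ t [ZMOD (Nat.gcd n k)]) :
    T n k s = T n k t := by
  obtain ⟨q, hq⟩ := h.dvd
  apply shiftT n k ((Nat.gcdB n k * q : ℤ) : ZMod n)
  have hb : ((Nat.gcd n k : ℤ) : ZMod n) = (k : ZMod n) * ((Nat.gcdB n k : ℤ) : ZMod n) := by
    have := Nat.gcd_eq_gcd_ab n k
    have : ((Nat.gcd n k : ℤ) : ZMod n)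
        = ((n * Nat.gcdA n k + k * Nat.gcdB n k : ℤ) : ZMod n) := by rw [← this]
    push_cast at this ⊢
    simpa [ZMod.natCast_self] using this
  have ht : (t : ZMod n) = (s : ZMod n) + ((Nat.gcd n k : ℤ) : ZMod n) * ((q : ℤ) : ZMod n) := by
    have : (t : ℤ) = s + (Nat.gcd n k : ℤ) * q := by linarith [hq]
    rw [this]; push_cast; ring
  rw [ht, hb, nsmul_eq_mul]
  push_cast
  ring
end

section
/- For integers n ≥ k > 0, s an integer, and β a unit modulo gcd(n,k), one has T(n,k,s) = T(n,k,βs). -/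
/-- Invariance under translation of every element by `t`. -/
lemma T'_add (n k : ℕ) (x t : ZMod n) :
    Nat.card {Q : Finset (ZMod n) // Q.card = k ∧ (∑ a ∈ Q, a) = x} =
    Nat.card {Q : Finset (ZMod n) // Q.card = k ∧ (∑ a ∈ Q, a) = x + k * t} := by
  apply Nat.card_congr
  refine Equiv.subtypeEquiv (Equiv.finsetCongr (Equiv.addRight t)) (fun Q => ?_)
  simp only [Equiv.finsetCongr_apply, Finset.card_map, Finset.sum_map,
    Equiv.coe_toEmbedding, Equiv.coe_addRight, Finset.sum_add_distrib,
    Finset.sum_const, nsmul_eq_mul]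
  constructor
  · rintro ⟨hc, hs⟩
    exact ⟨hc, by rw [hs, hc]⟩
  · rintro ⟨hc, hs⟩
    refine ⟨hc, ?_⟩
    rw [hc] at hs
    exact add_right_cancel hs

/-- Invariance under scaling of every element by a unit `u`. -/
lemma T'_mul (n k : ℕ) (x : ZMod n) (u : (ZMod n)ˣ) :
    Nat.card {Q : Finset (ZMod n) // Q.card = k ∧ (∑ a ∈ Q, a) = x} =
    Nat.card {Q : Finset (ZMod n) // Q.card = k ∧ (∑ a ∈ Q, a) = (u : ZMod n) * x} := by
  apply Nat.card_congr
  refine Equiv.subtypeEquiv (Equiv.finsetCongr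
    ⟨fun a => (u : ZMod n) * a, fun a => ((u⁻¹ : (ZMod n)ˣ) : ZMod n) * a,
      fun a => by simp [← mul_assoc], fun a => by simp [← mul_assoc]⟩) (fun Q => ?_)
  simp only [Equiv.finsetCongr_apply, Finset.card_map, Finset.sum_map,
    Equiv.coe_toEmbedding, Equiv.coe_fn_mk]
  rw [← Finset.mul_sum, Units.mul_right_inj]

/-- For `β` a unit modulo `gcd(n,k)`, one has `T(n,k,s) = T(n,k,βs)`. -/
theorem stmt_1 (n k : ℕ) (hk : 0 < k) (hkn : k ≤ n) (s β : ℤ)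
    (hβ : IsUnit (β : ZMod (Nat.gcd n k))) :
    T n k s = T n k (β * s) := by
  have hn : 0 < n := lt_of_lt_of_le hk hkn
  haveI : NeZero n := ⟨hn.ne'⟩
  set g := Nat.gcd n k with hg
  have hgn : g ∣ n := Nat.gcd_dvd_left n k
  obtain ⟨u, hu⟩ := ZMod.unitsMap_surjective hgn hβ.unit
  -- Integer representative of u
  set U : ℤ := ZMod.cast ((u : ZMod n)) with hU
  have hUu : (U : ZMod n) = (u : ZMod n) := ZMod.intCast_rightInverse _
  -- U ≡ β mod g
  have hcast : ((U : ZMod g)) = (β : ZMod g) := by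
    have h0 := congrArg Units.val hu
    simp only [ZMod.unitsMap_def, Units.coe_map, MonoidHom.coe_coe, ZMod.castHom_apply,
      IsUnit.unit_spec] at h0
    have h1 := (map_intCast (ZMod.castHom hgn (ZMod g)) U).symm
    rw [hUu, ZMod.castHom_apply] at h1
    rw [h1, h0]
  have hdvd : (g : ℤ) ∣ β - U := ((ZMod.intCast_eq_intCast_iff _ _ _).mp hcast).dvd
  obtain ⟨m, hm⟩ := hdvd
  -- (g : ZMod n) = k * b for some b
  have hbezout : ∃ b : ℤ, (g : ZMod n) = (k : ZMod n) * (b : ZMod n) := by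
    refine ⟨Nat.gcdB n k, ?_⟩
    have h1 : (g : ℤ) = n * Nat.gcdA n k + k * Nat.gcdB n k := Nat.gcd_eq_gcd_ab n k
    have := congrArg (fun z : ℤ => (z : ZMod n)) h1
    push_cast at this ⊢
    simpa using this
  obtain ⟨b, hb⟩ := hbezout
  -- β*s = u*s + k*t in ZMod n
  have key : ((β * s : ℤ) : ZMod n) = (u : ZMod n) * (s : ZMod n) + (k : ZMod n) * ((b * m * s : ℤ) : ZMod n) := by
    have hUeq : (U : ZMod n) = (β : ZMod n) - (k : ZMod n) * (b : ZMod n) * (m : ZMod n) := by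
      have : (U : ℤ) = β - g * m := by linarith [hm]
      have h2 := congrArg (fun z : ℤ => (z : ZMod n)) this
      push_cast at h2
      rw [h2, hb]
    push_cast
    rw [← hUu, hUeq]
    ring
  unfold T
  rw [key, T'_mul n k (s : ZMod n) u]
  exact T'_add n k ((u : ZMod n) * (s : ZMod n)) ((b * m * s : ℤ) : ZMod n)
end

section
/- For n ≥ k > 0, the number of k-element subsets of Z/nZ whose sum of elements is 0 modulo n equals (1/n) · ∑_{d | gcd(n,k)} (−1)^{k−k/d} φ(d) · C(n/d, k/d), where φ is Euler's totient function and C denotes the binomial coefficient. -/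
open Finset Polynomial

theorem Finset.prod_range_mul_eq_pow_of_periodic {M : Type*} [CommMonoid M] {f : ℕ → M} {e : ℕ}
    (hf : Function.Periodic f e) (m : ℕ) :
    ∏ i ∈ range (m * e), f i = (∏ i ∈ range e, f i) ^ m := by
  induction m with
  | zero => simp
  | succ m ih =>
    rw [add_one_mul, prod_range_add, ih, pow_succ]
    congr 1
    exact prod_congr rfl fun i _ => by rw [add_comm, ← Nat.cast_id m, hf.nat_mul m]

theorem ZMod.prod_univ_eq_prod_range {M : Type*} [CommMonoid M] {n : ℕ} [NeZero n]
    (f : ZMod n → M) : ∏ a, f a = ∏ i ∈ range n, f i := by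
  refine (prod_nbij (fun i : ℕ => (i : ZMod n)) (by simp) ?_ ?_ fun _ _ => rfl).symm
  · intro i hi j hj hij
    simpa [Nat.mod_eq_of_lt, mem_range.1 hi, mem_range.1 hj] using congrArg ZMod.val hij
  · intro a _
    exact ⟨a.val, by simp [ZMod.val_lt], by simp⟩

theorem AddChar.map_sum_eq_prod {A M ι : Type*} [AddCommMonoid A] [CommMonoid M]
    (ψ : AddChar A M) (s : Finset ι) (f : ι → A) :
    ψ (∑ i ∈ s, f i) = ∏ i ∈ s, ψ (f i) :=
  map_prod ψ.toMonoidHom (fun i => Multiplicative.ofAdd (f i)) s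

theorem AddChar.orderOf_apply {A M : Type*} [AddMonoid A] [Monoid M] {ψ : AddChar A M}
    (hψ : Function.Injective ψ) (a : A) : orderOf (ψ a) = addOrderOf a := by
  rw [← orderOf_ofAdd_eq_addOrderOf]
  exact orderOf_injective ψ.toMonoidHom hψ (Multiplicative.ofAdd a)

theorem IsAddCyclic.sum_addOrderOf {G M : Type*} [AddGroup G] [Fintype G] [IsAddCyclic G]
    [AddCommMonoid M] (f : ℕ → M) :
    ∑ g : G, f (addOrderOf g) = ∑ d ∈ (Fintype.card G).divisors, d.totient • f d := by
  classical
  rw [← sum_fiberwise_of_maps_to (t := (Fintype.card G).divisors) (g := addOrderOf)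
    fun g _ => Nat.mem_divisors.2 ⟨addOrderOf_dvd_card, Fintype.card_ne_zero⟩]
  refine sum_congr rfl fun d hd => ?_
  rw [sum_congr rfl fun g hg => by rw [(mem_filter.1 hg).2], sum_const,
    IsAddCyclic.card_addOrderOf_eq_totient (Nat.dvd_of_mem_divisors hd)]

theorem Nat.sum_divisors_ite_dvd {M : Type*} [AddCommMonoid M] {n : ℕ} (hn : n ≠ 0) (k : ℕ)
    (f : ℕ → M) :
    ∑ d ∈ n.divisors, (if d ∣ k then f d else 0) = ∑ d ∈ (n.gcd k).divisors, f d := by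
  rw [← sum_filter]
  congr 1
  ext d
  simp [Nat.dvd_gcd_iff, hn, Nat.gcd_ne_zero_left hn]

section Polynomial

variable {R : Type*} [CommRing R]

theorem Polynomial.X_pow_sub_C_eq_expand (e : ℕ) (c : R) :
    X ^ e - C c = expand R e (X + C (-c)) := by
  simp [sub_eq_add_neg]

theorem Polynomial.coeff_X_pow_sub_C_pow_mul {e : ℕ} (he : 0 < e) (c : R) (m t : ℕ) :
    ((X ^ e - C c) ^ m).coeff (t * e) = (-c) ^ (m - t) * m.choose t := by
  rw [X_pow_sub_C_eq_expand, ← map_pow, coeff_expand_mul he, coeff_X_add_C_pow]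

theorem Polynomial.coeff_X_pow_sub_C_pow_of_not_dvd {e t : ℕ} (he : 0 < e) (c : R) (m : ℕ)
    (ht : ¬ e ∣ t) : ((X ^ e - C c) ^ m).coeff t = 0 := by
  rw [X_pow_sub_C_eq_expand, ← map_pow, coeff_expand he, if_neg ht]

variable [IsDomain R]

theorem IsPrimitiveRoot.prod_range_mul_X_add_C {w : R} {e : ℕ} (hw : IsPrimitiveRoot w e)
    (he : 0 < e) (m : ℕ) :
    ∏ i ∈ range (m * e), (X + C (w ^ i)) = (X ^ e - C ((-1) ^ e)) ^ m := by
  have hper : Function.Periodic (fun i => X + C (w ^ i)) e := fun i => by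
    simp [pow_add, hw.pow_eq_one]
  rw [prod_range_mul_eq_pow_of_periodic hper, X_pow_sub_C_eq_prod hw he rfl]
  simp [sub_eq_add_neg]

theorem IsPrimitiveRoot.coeff_prod_range_X_add_C {w : R} {e n k : ℕ}
    (hw : IsPrimitiveRoot w e) (hen : e ∣ n) (hn : n ≠ 0) (hkn : k ≤ n) :
    (∏ i ∈ range n, (X + C (w ^ i))).coeff (n - k) =
      if e ∣ k then (-1) ^ (k - k / e) * ((n / e).choose (k / e) : R) else 0 := by
  have he : 0 < e := Nat.pos_of_dvd_of_pos hen (Nat.pos_of_ne_zero hn)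
  obtain ⟨m, rfl⟩ := hen
  rw [mul_comm e m, hw.prod_range_mul_X_add_C he]
  split_ifs with hk
  · obtain ⟨v, rfl⟩ := hk
    have hvm : v ≤ m := Nat.le_of_mul_le_mul_left hkn he
    have hsign : (-(-1) ^ e : R) ^ v = (-1) ^ (e * v - v) := by
      have : (e + 1) * v = e * v - v + 2 * v := by
        have := Nat.le_mul_of_pos_left v he
        rw [add_one_mul]; omega
      rw [← neg_one_mul, ← pow_succ', ← pow_mul, this, pow_add, pow_mul, neg_one_sq, one_pow,
        mul_one]
    rw [Nat.mul_div_cancel_left v he, Nat.mul_div_cancel m he,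
      show m * e - e * v = (m - v) * e by rw [Nat.sub_mul, mul_comm v e],
      coeff_X_pow_sub_C_pow_mul he, Nat.sub_sub_self hvm, Nat.choose_symm hvm, hsign]
  · rw [coeff_X_pow_sub_C_pow_of_not_dvd he]
    rwa [← mul_comm e m, Nat.dvd_sub_iff_right hkn (dvd_mul_right e m)]

end Polynomial

theorem T_eq_card_filter (n : ℕ) [NeZero n] (k : ℕ) (s : ℤ) :
    T n k s = #{Q ∈ powersetCard k (univ : Finset (ZMod n)) | ∑ a ∈ Q, a = (s : ZMod n)} := by
  rw [T, Nat.card_eq_fintype_card, Fintype.card_subtype]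
  congr 1
  ext Q
  simp [mem_powersetCard]

section Character

variable {n : ℕ} [NeZero n] {R : Type*} [CommRing R] [IsDomain R] {ψ : AddChar (ZMod n) R}

theorem AddChar.sum_powersetCard_apply_mul_sum (hψ : Function.Injective ψ) {k : ℕ} (hkn : k ≤ n)
    (j : ZMod n) :
    ∑ Q ∈ powersetCard k univ, ψ (j * ∑ a ∈ Q, a) =
      if addOrderOf j ∣ k then
        (-1) ^ (k - k / addOrderOf j) * ((n / addOrderOf j).choose (k / addOrderOf j) : R)
      else 0 := by
  have hw : IsPrimitiveRoot (ψ j) (addOrderOf j) :=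
    AddChar.orderOf_apply hψ j ▸ IsPrimitiveRoot.orderOf _
  have hvieta : ∑ Q ∈ powersetCard k univ, ψ (j * ∑ a ∈ Q, a) =
      (∏ a : ZMod n, (X + C (ψ (j * a)))).coeff (n - k) := by
    rw [prod_X_add_C_coeff _ _ (by simp), card_univ, ZMod.card, Nat.sub_sub_self hkn]
    simp only [mul_sum, AddChar.map_sum_eq_prod]
  have hpow (i : ℕ) : ψ (j * i) = ψ j ^ i := by
    rw [mul_comm, ← nsmul_eq_mul, AddChar.map_nsmul_eq_pow]
  rw [hvieta, ZMod.prod_univ_eq_prod_range]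
  simp only [hpow]
  exact hw.coeff_prod_range_X_add_C (by simpa using addOrderOf_dvd_card (x := j)) (NeZero.ne n) hkn

theorem AddChar.IsPrimitive.sum_sum_powersetCard_apply_mul_sum (hψ : ψ.IsPrimitive) (k : ℕ) :
    ∑ j : ZMod n, ∑ Q ∈ powersetCard k univ, ψ (j * ∑ a ∈ Q, a) = n * T n k 0 := by
  rw [sum_comm, T_eq_card_filter]
  simp [AddChar.sum_mulShift _ hψ, sum_ite, mul_comm]

end Character

theorem stmt_5_general (n k : ℕ) (hkn : k ≤ n) :
    (T n k 0 : ℤ) * n =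
      ∑ d ∈ (Nat.gcd n k).divisors,
        (-1) ^ (k - k / d) * (Nat.totient d : ℤ) * (Nat.choose (n / d) (k / d) : ℤ) := by
  rcases Nat.eq_zero_or_pos n with rfl | hn
  · obtain rfl : k = 0 := by omega
    simp
  have : NeZero n := ⟨hn.ne'⟩
  have hcount : (n : ℂ) * T n k 0 = ∑ d ∈ (n.gcd k).divisors,
      d.totient • ((-1) ^ (k - k / d) * ((n / d).choose (k / d) : ℂ)) := by
    rw [← (ZMod.isPrimitive_stdAddChar n).sum_sum_powersetCard_apply_mul_sum,
      ← Nat.sum_divisors_ite_dvd hn.ne']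
    simp only [AddChar.sum_powersetCard_apply_mul_sum ZMod.injective_stdAddChar hkn]
    rw [IsAddCyclic.sum_addOrderOf
      (fun d => if d ∣ k then (-1) ^ (k - k / d) * ((n / d).choose (k / d) : ℂ) else 0), ZMod.card]
    simp only [smul_ite, smul_zero]
  have hcast : ((T n k 0 * n : ℤ) : ℂ) = ((∑ d ∈ (n.gcd k).divisors,
      (-1) ^ (k - k / d) * (d.totient : ℤ) * ((n / d).choose (k / d) : ℤ) : ℤ) : ℂ) := by
    push_cast
    rw [mul_comm, hcount]
    exact sum_congr rfl fun d _ => by rw [nsmul_eq_mul]; ring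
  exact_mod_cast hcast

/-- Barnes's formula:
`T(n,k,0) = (1/n) ∑_{d ∣ gcd(n,k)} (−1)^{k−k/d} φ(d) C(n/d, k/d)`. -/
theorem stmt_5 (n k : ℕ) (hk : 0 < k) (hkn : k ≤ n) :
    (T n k 0 : ℤ) * n =
      ∑ d ∈ (Nat.gcd n k).divisors,
        (-1) ^ (k - k / d) * (Nat.totient d : ℤ) * (Nat.choose (n / d) (k / d) : ℤ) :=
  stmt_5_general n k hkn
end

section
/- By Burnside's lemma, the number of orbits of the translation action of Z/nZ on the set of k-element subsets of Z/nZ equals (1/n)·∑_{d | gcd(n,k)} φ(d)·C(n/d, k/d). -/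
open Pointwise

/-- `N n k` is the number of orbits of the translation action of `ℤ/nℤ` on the set of
`k`-element subsets of `ℤ/nℤ` (necklaces with `k` black and `n - k` white beads). -/
noncomputable def N (n k : ℕ) : ℕ :=
  Nat.card {C : Set (Finset (ZMod n)) //
    ∃ Q : Finset (ZMod n), Q.card = k ∧ C = AddAction.orbit (ZMod n) Q}

set_option linter.unusedSectionVars false

section Aux

variable {n : ℕ} [NeZero n]

private lemma stable_trans (g : ZMod n) {Q : Finset (ZMod n)} (hQ : g +ᵥ Q = Q) {x y : ZMod n}
    (hxy : (QuotientAddGroup.mk x : ZMod n ⧸ AddSubgroup.zmultiples g) = QuotientAddGroup.mk y)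
    (hx : x ∈ Q) : y ∈ Q := by
  have hH : AddSubgroup.zmultiples g ≤ AddAction.stabilizer (ZMod n) Q :=
    AddSubgroup.zmultiples_le.mpr (by rwa [AddAction.mem_stabilizer_iff])
  have h1 : -x + y ∈ AddSubgroup.zmultiples g := QuotientAddGroup.eq.mp hxy
  have h2 : (-x + y) +ᵥ Q = Q := hH h1
  have h3 : (-x + y) +ᵥ x ∈ (-x + y) +ᵥ Q := Finset.vadd_mem_vadd_finset hx
  rw [h2] at h3
  have h4 : (-x + y) +ᵥ x = y := by rw [vadd_eq_add]; abel
  rwa [h4] at h3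

private lemma card_stable (g : ZMod n) {Q : Finset (ZMod n)} (hQ : g +ᵥ Q = Q) :
    Q.card = addOrderOf g *
      (Q.image (QuotientAddGroup.mk : ZMod n → ZMod n ⧸ AddSubgroup.zmultiples g)).card := by
  classical
  set H := AddSubgroup.zmultiples g with hH
  set f : ZMod n → ZMod n ⧸ H := QuotientAddGroup.mk with hf
  rw [Finset.card_eq_sum_card_fiberwise (fun x hx => Finset.mem_image_of_mem f hx)]
  rw [Finset.sum_congr rfl (fun b hb => ?_), Finset.sum_const, smul_eq_mul, mul_comm]
  obtain ⟨y, hy, rfl⟩ := Finset.mem_image.mp hb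
  have hfil : Q.filter (fun x => f x = f y) = Finset.univ.filter (fun x => f x = f y) := by
    ext x
    simp only [Finset.mem_filter, Finset.mem_univ, true_and, and_iff_right_iff_imp]
    exact fun h => stable_trans g hQ h.symm hy
  rw [hfil, ← Fintype.card_subtype]
  have e : {x : ZMod n // f x = f y} ≃ H :=
    { toFun := fun x => ⟨-y + x.1, QuotientAddGroup.eq.mp x.2.symm⟩
      invFun := fun h => ⟨y + h.1, by
        rw [hf]
        rw [QuotientAddGroup.eq]
        have : -(y + h.1) + y = -h.1 := by abel
        rw [this]
        exact neg_mem h.2⟩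
      left_inv := fun x => Subtype.ext (by simp)
      right_inv := fun h => Subtype.ext (by simp) }
  rw [Fintype.card_congr e, ← Nat.card_eq_fintype_card, hH, Nat.card_zmultiples]

private lemma card_fixed (g : ZMod n) (k : ℕ) :
    Nat.card {Q : Finset (ZMod n) // Q.card = k ∧ g +ᵥ Q = Q} =
      if addOrderOf g ∣ k then (n / addOrderOf g).choose (k / addOrderOf g) else 0 := by
  classical
  set d := addOrderOf g with hd
  set H := AddSubgroup.zmultiples g with hH
  letI : Fintype (ZMod n ⧸ H) := Fintype.ofFinite _
  set f : ZMod n → ZMod n ⧸ H := QuotientAddGroup.mk with hf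
  have hfg : ∀ x : ZMod n, f (g + x) = f x := fun x => by
    rw [hf, QuotientAddGroup.eq]
    have : -(g + x) + x = -g := by abel
    rw [this]; exact neg_mem (AddSubgroup.mem_zmultiples g)
  have hfng : ∀ x : ZMod n, f (-g + x) = f x := fun x => by
    rw [hf, QuotientAddGroup.eq]
    have : -(-g + x) + x = g := by abel
    rw [this]; exact AddSubgroup.mem_zmultiples g
  let e0 : {Q : Finset (ZMod n) // g +ᵥ Q = Q} ≃ Finset (ZMod n ⧸ H) :=
  { toFun := fun Q => Q.1.image f
    invFun := fun T => ⟨Finset.univ.filter (fun x => f x ∈ T), by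
      ext x
      simp only [Finset.mem_vadd_finset, Finset.mem_filter, Finset.mem_univ, true_and]
      constructor
      · rintro ⟨y, hy, rfl⟩
        rwa [vadd_eq_add, hfg]
      · intro hx
        exact ⟨-g + x, by rwa [hfng], by rw [vadd_eq_add, add_neg_cancel_left]⟩⟩
    left_inv := fun Q => Subtype.ext (by
      ext x
      simp only [Finset.mem_filter, Finset.mem_univ, true_and, Finset.mem_image]
      constructor
      · rintro ⟨y, hy, hyx⟩
        exact stable_trans g Q.2 hyx hy
      · intro hx; exact ⟨x, hx, rfl⟩)
    right_inv := fun T => by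
      ext t
      obtain ⟨x, rfl⟩ := QuotientAddGroup.mk_surjective t
      simp only [Finset.mem_image, Finset.mem_filter, Finset.mem_univ, true_and]
      constructor
      · rintro ⟨y, hy, hyx⟩; rwa [← hyx]
      · intro ht; exact ⟨x, ht, rfl⟩ }
  have key : ∀ Q : {Q : Finset (ZMod n) // g +ᵥ Q = Q}, Q.1.card = d * (e0 Q).card :=
    fun Q => card_stable g Q.2
  let e1 : {Q : Finset (ZMod n) // Q.card = k ∧ g +ᵥ Q = Q} ≃
      {T : Finset (ZMod n ⧸ H) // d * T.card = k} :=
  { toFun := fun Q => ⟨e0 ⟨Q.1, Q.2.2⟩, by rw [← key ⟨Q.1, Q.2.2⟩]; exact Q.2.1⟩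
    invFun := fun T => ⟨(e0.symm T.1).1,
      by rw [key (e0.symm T.1), e0.apply_symm_apply]; exact T.2, (e0.symm T.1).2⟩
    left_inv := fun Q => Subtype.ext (by
      show (e0.symm (e0 ⟨Q.1, Q.2.2⟩)).1 = Q.1
      rw [e0.symm_apply_apply])
    right_inv := fun T => Subtype.ext (by
      show e0 ⟨(e0.symm T.1).1, (e0.symm T.1).2⟩ = T.1
      rw [show (⟨(e0.symm T.1).1, (e0.symm T.1).2⟩ : {Q : Finset (ZMod n) // g +ᵥ Q = Q}) =
        e0.symm T.1 from rfl, e0.apply_symm_apply]) }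
  rw [Nat.card_congr e1]
  have hd0 : 0 < d := addOrderOf_pos g
  split_ifs with hdk
  · have e2 : {T : Finset (ZMod n ⧸ H) // d * T.card = k} ≃
        {T : Finset (ZMod n ⧸ H) // T.card = k / d} :=
      Equiv.subtypeEquivRight (fun T => by
        constructor
        · intro h; exact (Nat.div_eq_of_eq_mul_left hd0 (by rw [← h]; ring)).symm
        · intro h; rw [h]; exact Nat.mul_div_cancel' hdk)
    rw [Nat.card_congr e2, Nat.card_eq_fintype_card, Fintype.card_finset_len]
    congr 1
    have hcard := AddSubgroup.card_eq_card_quotient_mul_card_addSubgroup H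
    rw [Nat.card_zmod, hH, Nat.card_zmultiples, ← hd, Nat.card_eq_fintype_card] at hcard
    exact (Nat.div_eq_of_eq_mul_left hd0 hcard).symm
  · have : IsEmpty {T : Finset (ZMod n ⧸ H) // d * T.card = k} :=
      ⟨fun T => hdk ⟨T.1.card, T.2.symm⟩⟩
    exact Nat.card_of_isEmpty

end Aux

instance necklaceAddAction (n k : ℕ) : AddAction (ZMod n) {Q : Finset (ZMod n) // Q.card = k} where
  vadd g Q := ⟨g +ᵥ Q.1, by rw [Finset.card_vadd_finset]; exact Q.2⟩
  zero_vadd Q := Subtype.ext (zero_vadd _ _)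
  add_vadd g h Q := Subtype.ext (add_vadd g h Q.1)

private lemma N_eq (n k : ℕ) :
    N n k = Nat.card
      (Quotient (AddAction.orbitRel (ZMod n) {Q : Finset (ZMod n) // Q.card = k})) := by
  set S := {Q : Finset (ZMod n) // Q.card = k}
  let f : Quotient (AddAction.orbitRel (ZMod n) S) →
      {C : Set (Finset (ZMod n)) // ∃ Q, Q.card = k ∧ C = AddAction.orbit (ZMod n) Q} :=
    Quotient.lift (fun q => ⟨AddAction.orbit (ZMod n) q.1, q.1, q.2, rfl⟩)
      (fun a b hab => by
        obtain ⟨g, hg⟩ := AddAction.mem_orbit_iff.mp hab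
        have hval : a.1 = g +ᵥ b.1 := by rw [← hg]; rfl
        exact Subtype.ext (by
          show AddAction.orbit (ZMod n) a.1 = AddAction.orbit (ZMod n) b.1
          rw [hval, AddAction.orbit_vadd]))
  have hinj : Function.Injective f := by
    intro x y
    induction x using Quotient.ind with | _ a => ?_
    induction y using Quotient.ind with | _ b => ?_
    intro h
    have h1 : AddAction.orbit (ZMod n) a.1 = AddAction.orbit (ZMod n) b.1 :=
      congrArg Subtype.val h
    have h2 : a.1 ∈ AddAction.orbit (ZMod n) b.1 := h1 ▸ AddAction.mem_orbit_self a.1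
    obtain ⟨g, hg⟩ := AddAction.mem_orbit_iff.mp h2
    exact Quotient.sound (AddAction.mem_orbit_iff.mpr ⟨g, Subtype.ext hg⟩)
  have hsurj : Function.Surjective f := by
    rintro ⟨C, Q, hQ, rfl⟩
    exact ⟨Quotient.mk _ ⟨Q, hQ⟩, rfl⟩
  exact (Nat.card_congr (Equiv.ofBijective f ⟨hinj, hsurj⟩)).symm

private lemma fixedBy_card (n k : ℕ) (g : ZMod n) :
    Nat.card (AddAction.fixedBy {Q : Finset (ZMod n) // Q.card = k} g) =
      Nat.card {Q : Finset (ZMod n) // Q.card = k ∧ g +ᵥ Q = Q} := by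
  apply Nat.card_congr
  refine ⟨fun x => ⟨x.1.1, x.1.2, congrArg Subtype.val x.2⟩,
    fun Q => ⟨⟨Q.1, Q.2.1⟩, Subtype.ext Q.2.2⟩, fun _ => rfl, fun _ => rfl⟩

/-- Burnside: the number of orbits of the translation action of `ℤ/nℤ` on `k`-element
subsets is `(1/n) ∑_{d ∣ gcd(n,k)} φ(d) C(n/d, k/d)`. -/
theorem stmt_13 (n k : ℕ) (hk : 0 < k) (hkn : k ≤ n) :
    (N n k : ℤ) * n =
      ∑ d ∈ (Nat.gcd n k).divisors,
        (Nat.totient d : ℤ) * (Nat.choose (n / d) (k / d) : ℤ) := by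
  have hn : n ≠ 0 := by omega
  haveI : NeZero n := ⟨hn⟩
  classical
  set S := {Q : Finset (ZMod n) // Q.card = k} with hS
  haveI : ∀ a : ZMod n, Fintype (AddAction.fixedBy S a) := fun a => Fintype.ofFinite _
  haveI : Fintype (AddAction.orbitRel.Quotient (ZMod n) S) := Fintype.ofFinite _
  have burn := AddAction.sum_card_fixedBy_eq_card_orbits_mul_card_addGroup (ZMod n) S
  have hN : N n k = Fintype.card (AddAction.orbitRel.Quotient (ZMod n) S) := by
    rw [N_eq n k, Nat.card_eq_fintype_card]
  have hterm : ∀ a : ZMod n, Fintype.card (AddAction.fixedBy S a) =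
      if addOrderOf a ∣ k then (n / addOrderOf a).choose (k / addOrderOf a) else 0 := fun a => by
    rw [← Nat.card_eq_fintype_card, fixedBy_card, card_fixed]
  have hsum : (∑ a : ZMod n, Fintype.card (AddAction.fixedBy S a)) =
      ∑ d ∈ n.divisors,
        Nat.totient d * (if d ∣ k then (n / d).choose (k / d) else 0) := by
    have hmaps : ∀ a : ZMod n, a ∈ Finset.univ → addOrderOf a ∈ n.divisors := fun a _ => by
      rw [Nat.mem_divisors]
      exact ⟨by simpa [ZMod.card] using addOrderOf_dvd_card (x := a), hn⟩
    rw [← Finset.sum_fiberwise_of_maps_to hmaps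
      (fun a => Fintype.card (AddAction.fixedBy S a))]
    refine Finset.sum_congr rfl fun d hd => ?_
    have hdvd : d ∣ Fintype.card (ZMod n) := by
      rw [ZMod.card]; exact (Nat.mem_divisors.mp hd).1
    rw [Finset.sum_congr rfl (fun a ha => ?_), Finset.sum_const, smul_eq_mul,
      IsAddCyclic.card_addOrderOf_eq_totient hdvd]
    rw [hterm a, (Finset.mem_filter.mp ha).2]
  have hfilter : n.divisors.filter (· ∣ k) = (Nat.gcd n k).divisors := by
    ext a
    simp only [Finset.mem_filter, Nat.mem_divisors, Nat.dvd_gcd_iff]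
    have : Nat.gcd n k ≠ 0 := fun h => hn (Nat.eq_zero_of_gcd_eq_zero_left h)
    tauto
  have hnat : N n k * n = ∑ d ∈ (Nat.gcd n k).divisors,
      Nat.totient d * (n / d).choose (k / d) := by
    rw [ZMod.card] at burn
    rw [hN, ← burn, hsum]
    rw [← hfilter, Finset.sum_filter]
    exact Finset.sum_congr rfl fun d _ => by rw [mul_ite, mul_zero]
  have := congrArg (Nat.cast (R := ℤ)) hnat
  push_cast at this
  convert this using 1
end

section
/- The binomial coefficient satisfies C(n,k) = ∑_{d | gcd(n,k)} (n/d) · L(n/d, k/d), where L(n,k) = (1/n)·∑_{d | gcd(n,k)} μ(d)·C(n/d, k/d); equivalently L(n,k) is obtained from this identity by Möbius inversion. -/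
/-- `L n k` is the number of binary Lyndon words with `k` ones and `n - k` zeros:
`L(n,k) = (1/n) ∑_{d ∣ gcd(n,k)} μ(d) C(n/d, k/d)`. -/
noncomputable def L (n k : ℕ) : ℚ :=
  (1 / n) * ∑ d ∈ (Nat.gcd n k).divisors,
    (ArithmeticFunction.moebius d : ℤ) * (Nat.choose (n / d) (k / d) : ℚ)

lemma L_key (a b : ℕ) (hab : Nat.Coprime a b) (ha : 0 < a) (m : ℕ) (hm : 0 < m) :
    ((a * m : ℕ) : ℚ) * L (a * m) (b * m) =
      ∑ x ∈ m.divisorsAntidiagonal,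
        ((ArithmeticFunction.moebius x.1 : ℤ) : ℚ) * (Nat.choose (a * x.2) (b * x.2) : ℚ) := by
  have hgcd : Nat.gcd (a * m) (b * m) = m := by
    rw [Nat.gcd_mul_right, hab, one_mul]
  have ham : (a * m : ℕ) ≠ 0 := by positivity
  rw [L, hgcd, ← mul_assoc, mul_one_div, div_self (by exact_mod_cast ham), one_mul]
  rw [Nat.sum_divisorsAntidiagonal
    (f := fun d e => ((ArithmeticFunction.moebius d : ℤ) : ℚ) *
      (Nat.choose (a * e) (b * e) : ℚ))]
  refine Finset.sum_congr rfl fun d hd => ?_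
  have hdm : d ∣ m := Nat.dvd_of_mem_divisors hd
  rw [Nat.mul_div_assoc a hdm, Nat.mul_div_assoc b hdm]

/-- `C(n,k) = ∑_{d ∣ gcd(n,k)} (n/d) L(n/d, k/d)`. -/
theorem stmt_15 (n k : ℕ) (hk : 0 < k) (hkn : k ≤ n) :
    (Nat.choose n k : ℚ) =
      ∑ d ∈ (Nat.gcd n k).divisors, ((n / d : ℕ) : ℚ) * L (n / d) (k / d) := by
  set g := Nat.gcd n k with hg
  have hn : 0 < n := lt_of_lt_of_le hk hkn
  have hg0 : 0 < g := Nat.gcd_pos_of_pos_left _ hn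
  set a := n / g with hA
  set b := k / g with hB
  have hga : a * g = n := Nat.div_mul_cancel (Nat.gcd_dvd_left n k)
  have hgb : b * g = k := Nat.div_mul_cancel (Nat.gcd_dvd_right n k)
  have hab : Nat.Coprime a b := Nat.coprime_div_gcd_div_gcd hg0
  have ha : 0 < a := by
    rcases Nat.eq_zero_or_pos a with h | h
    · exfalso; rw [← hga, h, zero_mul] at hn; exact lt_irrefl 0 hn
    · exact h
  have inv := (ArithmeticFunction.sum_eq_iff_sum_mul_moebius_eq_on (R := ℚ)
    (f := fun m => ((a * m : ℕ) : ℚ) * L (a * m) (b * m))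
    (g := fun m => (Nat.choose (a * m) (b * m) : ℚ))
    {m | m ∣ g} (fun x y hxy hy => dvd_trans hxy hy)).mpr
    (fun m hm _ => (L_key a b hab ha m hm).symm) g hg0 (dvd_refl g)
  have h1 : (Nat.choose n k : ℚ) = ∑ i ∈ g.divisors, ((a * i : ℕ) : ℚ) * L (a * i) (b * i) := by
    rw [inv, hga, hgb]
  rw [h1]
  rw [← Nat.sum_div_divisors g (fun i => ((a * i : ℕ) : ℚ) * L (a * i) (b * i))]
  refine Finset.sum_congr rfl fun d hd => ?_
  have hdg : d ∣ g := Nat.dvd_of_mem_divisors hd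
  have h2 : a * (g / d) = n / d := by
    rw [← Nat.mul_div_assoc a hdg, hga]
  have h3 : b * (g / d) = k / d := by
    rw [← Nat.mul_div_assoc b hdg, hgb]
  rw [h2, h3]
end

section
/- Let A be a finite abelian group of order N, and let a ∈ A have order d. The trace of a acting on the k-th exterior power Λ^k of the regular representation of A equals (−1)^{(d−1)(k/d)}·C(N/d, k/d) if d divides k, and 0 otherwise. -/
/-!
Translation by `a` permutes the basis `(δ_b)` of `ℂ[A]`, so it permutes the wedge basis
`(e_S)_{|S| = k}` of `⋀^k ℂ[A]` up to sign: the trace is the sum, over the `k`-subsets `S` with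
`a S = S`, of the sign of `a` acting on `S`. Such an `S` is a union of `k / d` cosets of `⟨a⟩`,
on each of which `a` acts as a `d`-cycle, so the sign is `(-1) ^ ((d - 1) * (k / d))`; and these
`S` correspond to the `(k / d)`-subsets of `A ⧸ ⟨a⟩`, of which there are `C(N / d, k / d)`.
-/

open Module Subgroup Pointwise Set.powersetCard

namespace exteriorPower

variable {R M : Type*} [CommRing R] [AddCommGroup M] [Module R M]

theorem coe_map_apply {N : Type*} [AddCommGroup N] [Module R N] (f : M →ₗ[R] N) {n : ℕ}
    (x : ⋀[R]^n M) : (map n f x : ExteriorAlgebra R N) = ExteriorAlgebra.map f x := by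
  have : (⋀[R]^n N).subtype ∘ₗ map n f =
      (ExteriorAlgebra.map f).toLinearMap ∘ₗ (⋀[R]^n M).subtype := by
    ext v
    simp [ExteriorAlgebra.map_apply_ιMulti]
  exact LinearMap.congr_fun this x

variable {I : Type*} [LinearOrder I] [Fintype I]

theorem repr_map_basis_self_of_perm (b : Basis I R M) (σ : Equiv.Perm I) {f : M →ₗ[R] M}
    (hf : ∀ i, f (b i) = b (σ i)) (n : ℕ) (s : Set.powersetCard I n) :
    (b.exteriorPower n).repr (map n f (b.exteriorPower n s)) s =
      if h : ∀ i, σ i ∈ s.val ↔ i ∈ s.val then (Equiv.Perm.sign (σ.subtypePerm h) : R)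
      else 0 := by
  set e := orderIsoOfFin s
  have he : ∀ i, (ofFinEmbEquiv.symm s i : I) = e i := fun i => rfl
  rw [basis_apply, map_apply_ιMulti_family, basis_repr_apply, ιMulti_family,
    ιMultiDual_apply_ιMulti]
  simp only [Function.comp_apply, hf, Basis.coord_apply, Basis.repr_self, he]
  split_ifs with h
  · set π := e.toEquiv.symm.permCongr (σ.subtypePerm h)
    have hπ : ∀ i, (e (π i) : I) = σ (e i) := fun i => by simp [π, Equiv.permCongr_apply]
    have hM : (Matrix.of fun i j => Finsupp.single (σ (e i)) (1 : R) (e j)) =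
        π.permMatrix R := by
      ext i j
      simp [PEquiv.toMatrix_apply, Finsupp.single_apply, ← hπ]
    rw [hM, Matrix.det_permutation, Equiv.Perm.sign_permCongr]
  · obtain ⟨i, hi, hσi⟩ : ∃ i ∈ s.val, σ i ∉ s.val := by
      by_contra! hs
      have hmap : s.val.map σ.toEmbedding = s.val :=
        Finset.map_eq_of_subset fun _ hx => by
          obtain ⟨i, hi, rfl⟩ := Finset.mem_map.mp hx
          exact hs i hi
      exact h fun i => by
        simpa only [hmap, Equiv.coe_toEmbedding] using Finset.mem_map' σ.toEmbedding (s := s.val)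
    apply Matrix.det_eq_zero_of_row_eq_zero (e.symm ⟨i, hi⟩)
    intro j
    simp only [Matrix.of_apply, OrderIso.apply_symm_apply]
    exact Finsupp.single_eq_of_ne fun hc => hσi (hc ▸ (e j).2)

theorem trace_map_of_perm (b : Basis I R M) (σ : Equiv.Perm I) {f : M →ₗ[R] M}
    (hf : ∀ i, f (b i) = b (σ i)) (n : ℕ) :
    LinearMap.trace R _ (map n f) = ∑ s : Set.powersetCard I n,
      if h : ∀ i, σ i ∈ s.val ↔ i ∈ s.val then (Equiv.Perm.sign (σ.subtypePerm h) : R)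
      else 0 := by
  rw [LinearMap.trace_eq_matrix_trace R (b.exteriorPower n)]
  exact Finset.sum_congr rfl fun s _ => by
    rw [Matrix.diag_apply, LinearMap.toMatrix_apply, repr_map_basis_self_of_perm b σ hf]

end exteriorPower

theorem pow_finRotate {M : Type*} [Monoid M] {x : M} {n : ℕ} (hx : x ^ n = 1) (j : Fin n) :
    x ^ (finRotate n j : ℕ) = x * x ^ (j : ℕ) := by
  cases n with
  | zero => exact j.elim0
  | succ n =>
    rw [finRotate_apply]
    by_cases hj : j = Fin.last n
    · rw [hj, Fin.last_add_one, Fin.val_zero, pow_zero, Fin.val_last, ← pow_succ', hx]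
    · rw [Fin.val_add_one_of_lt (Fin.lt_last_iff_ne_last.2 hj), pow_succ']

section Translation

variable {G : Type*} [CommGroup G] (a : G)

theorem mk_mul_left (x : G) : ((a * x : G) : G ⧸ zpowers a) = x := by
  rw [mul_comm]
  exact QuotientGroup.mk_mul_of_mem x (mem_zpowers a)

section Finite

variable [Finite G]

noncomputable def zpowersCosetEquiv : (G ⧸ zpowers a) × Fin (orderOf a) ≃ G where
  toFun p := p.1.out * a ^ (p.2 : ℕ)
  invFun x := (x, (finEquivZPowers (isOfFinOrder_of_finite a)).symm
    ⟨(x : G ⧸ zpowers a).out⁻¹ * x, QuotientGroup.eq.1 (QuotientGroup.out_eq' _)⟩)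
  left_inv := by
    rintro ⟨q, j⟩
    have hq : ((q.out * a ^ (j : ℕ) : G) : G ⧸ zpowers a) = q := by
      rw [QuotientGroup.mk_mul_of_mem _ (pow_mem (mem_zpowers a) _), QuotientGroup.out_eq']
    refine Prod.ext hq ((Equiv.symm_apply_eq _).2 (Subtype.ext ?_))
    simp only [hq, inv_mul_cancel_left, finEquivZPowers_apply]
  right_inv x := by
    simp only [pow_finEquivZPowers_symm_apply, mul_inv_cancel_left]

theorem zpowersCosetEquiv_apply (q : G ⧸ zpowers a) (j : Fin (orderOf a)) :
    zpowersCosetEquiv a (q, j) = q.out * a ^ (j : ℕ) := rfl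

theorem mul_zpowersCosetEquiv (q : G ⧸ zpowers a) (j : Fin (orderOf a)) :
    a * zpowersCosetEquiv a (q, j) = zpowersCosetEquiv a (q, finRotate _ j) := by
  rw [zpowersCosetEquiv_apply, zpowersCosetEquiv_apply, pow_finRotate (pow_orderOf_eq_one a),
    mul_left_comm]

end Finite

section Invariant

variable [DecidableEq G] {a} {s : Finset G}

theorem mk_mem_image_mk_iff (hs : ∀ x, a * x ∈ s ↔ x ∈ s) {x : G} :
    (x : G ⧸ zpowers a) ∈ s.image (↑) ↔ x ∈ s := by
  refine ⟨fun hx => ?_, Finset.mem_image_of_mem _⟩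
  obtain ⟨y, hy, hyx⟩ := Finset.mem_image.1 hx
  have ha : a ∈ MulAction.stabilizer G s := inv_mem_iff.1 <| MulAction.mem_stabilizer_iff.2 <|
    Finset.ext fun x => by rw [Finset.mem_inv_smul_finset_iff]; exact hs x
  have hyx' : (y⁻¹ * x) • s = s :=
    MulAction.mem_stabilizer_iff.1 (zpowers_le.2 ha (QuotientGroup.eq.1 hyx))
  simpa [hyx'] using Finset.smul_mem_smul_finset (a := y⁻¹ * x) hy

variable [Finite G]

noncomputable def cosetProdEquiv (hs : ∀ x, a * x ∈ s ↔ x ∈ s) :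
    s ≃ (s.image ((↑) : G → G ⧸ zpowers a)) × Fin (orderOf a) :=
  ((zpowersCosetEquiv a).symm.subtypeEquiv fun _ => (mk_mem_image_mk_iff hs).symm).trans
    Equiv.prodSubtypeFstEquivSubtypeProd

theorem permCongr_cosetProdEquiv (hs : ∀ x, a * x ∈ s ↔ x ∈ s) :
    (cosetProdEquiv hs).permCongr ((Equiv.mulLeft a).subtypePerm hs) =
      Equiv.prodCongrRight fun _ => finRotate (orderOf a) := by
  ext ⟨⟨q, hq⟩, j⟩ : 1
  rw [Equiv.permCongr_apply, ← Equiv.eq_symm_apply]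
  exact Subtype.ext (mul_zpowersCosetEquiv a q j)

theorem card_eq_card_image_mk_mul (hs : ∀ x, a * x ∈ s ↔ x ∈ s) :
    s.card = (s.image ((↑) : G → G ⧸ zpowers a)).card * orderOf a := by
  simpa using Fintype.card_congr (cosetProdEquiv hs)

theorem sign_subtypePerm_mulLeft (hs : ∀ x, a * x ∈ s ↔ x ∈ s) :
    Equiv.Perm.sign ((Equiv.mulLeft a).subtypePerm hs) =
      ((-1) ^ (orderOf a - 1)) ^ (s.card / orderOf a) := by
  rw [← Equiv.Perm.sign_permCongr (cosetProdEquiv hs), permCongr_cosetProdEquiv,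
    Equiv.Perm.sign_prodCongrRight, Finset.prod_const, sign_finRotate, Finset.card_univ,
    Fintype.card_coe, card_eq_card_image_mk_mul hs, Nat.mul_div_cancel _ (orderOf_pos a)]

end Invariant

variable [Fintype G]

theorem image_mk_filter_mk_mem (T : Finset (G ⧸ zpowers a)) :
    (Finset.univ.filter fun x : G => (x : G ⧸ zpowers a) ∈ T).image (↑) = T := by
  ext q
  simp only [Finset.mem_image, Finset.mem_filter, Finset.mem_univ, true_and]
  exact ⟨fun ⟨x, hx, hxq⟩ => hxq ▸ hx,
    fun hq => ⟨q.out, by rwa [QuotientGroup.out_eq'], QuotientGroup.out_eq' q⟩⟩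

variable [DecidableEq G]

noncomputable def invariantFinsetEquiv (k : ℕ) :
    {s : Finset G // s.card = k ∧ ∀ x, a * x ∈ s ↔ x ∈ s} ≃
      {T : Finset (G ⧸ zpowers a) // T.card * orderOf a = k} where
  toFun s := ⟨s.1.image (↑), (card_eq_card_image_mk_mul s.2.2).symm.trans s.2.1⟩
  invFun T := ⟨Finset.univ.filter (fun x : G => (x : G ⧸ zpowers a) ∈ T.1), by
    have hinv : ∀ x, a * x ∈ Finset.univ.filter (fun x : G => (x : G ⧸ zpowers a) ∈ T.1) ↔
        x ∈ Finset.univ.filter (fun x : G => (x : G ⧸ zpowers a) ∈ T.1) := fun x => by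
      simp only [Finset.mem_filter, Finset.mem_univ, true_and, mk_mul_left]
    exact ⟨by rw [card_eq_card_image_mk_mul hinv, image_mk_filter_mk_mem, T.2], hinv⟩⟩
  left_inv s := Subtype.ext <| Finset.ext fun x => by
    simp only [Finset.mem_filter, Finset.mem_univ, true_and, mk_mem_image_mk_iff s.2.2]
  right_inv T := Subtype.ext (image_mk_filter_mk_mem a T)

theorem card_invariant_finsets (k : ℕ) :
    Fintype.card {s : Finset G // s.card = k ∧ ∀ x, a * x ∈ s ↔ x ∈ s} =
      if orderOf a ∣ k then (Fintype.card G / orderOf a).choose (k / orderOf a) else 0 := by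
  have hd := orderOf_pos a
  rw [Fintype.card_congr (invariantFinsetEquiv a k)]
  split_ifs with hk
  · obtain ⟨m, rfl⟩ := hk
    have hQ : Fintype.card (G ⧸ zpowers a) = Fintype.card G / orderOf a := by
      rw [← Nat.card_eq_fintype_card, ← Nat.card_eq_fintype_card,
        card_eq_card_quotient_mul_card_subgroup (zpowers a), Nat.card_zpowers,
        Nat.mul_div_cancel _ hd]
    rw [Fintype.card_congr (Equiv.subtypeEquivRight fun T => by
        rw [mul_comm, Nat.mul_left_cancel_iff hd]),
      Fintype.card_finset_len, hQ, Nat.mul_div_cancel_left _ hd]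
  · exact Fintype.card_eq_zero_iff.2 ⟨fun T => hk ⟨T.1.card, by rw [mul_comm]; exact T.2.symm⟩⟩

end Translation

theorem trace_exteriorPower_map_mulLeft {R G : Type*} [CommRing R] [CommGroup G] [Fintype G]
    (a : G) (k : ℕ) :
    LinearMap.trace R _ (exteriorPower.map k (Finsupp.lmapDomain R R (a * ·))) =
      if orderOf a ∣ k then
        (-1 : R) ^ ((orderOf a - 1) * (k / orderOf a)) *
          (Fintype.card G / orderOf a).choose (k / orderOf a)
      else 0 := by
  classical
  let : LinearOrder G := LinearOrder.lift' _ (Fintype.equivFin G).injective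
  rw [exteriorPower.trace_map_of_perm Finsupp.basisSingleOne (Equiv.mulLeft a)
    (fun _ => Finsupp.mapDomain_single) k]
  set P : Finset G → Prop := fun s => ∀ x, a * x ∈ s ↔ x ∈ s
  set ε : R := (-1) ^ ((orderOf a - 1) * (k / orderOf a))
  calc _ = ∑ s : Set.powersetCard G k with P s.val, ε := by
        rw [Finset.sum_filter]
        refine Finset.sum_congr rfl fun s _ => ?_
        by_cases h : P s.val
        · rw [if_pos h]
          refine (dif_pos h).trans ?_
          rw [sign_subtypePerm_mulLeft h, s.2]
          push_cast
          ring
        · rw [if_neg h]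
          exact dif_neg h
    _ = Fintype.card {s : Finset G // s.card = k ∧ P s} * ε := by
        rw [Finset.sum_const, nsmul_eq_mul, ← Fintype.card_subtype]
        exact congrArg (fun n : ℕ => (n : R) * ε)
          (Fintype.card_congr (Equiv.subtypeSubtypeEquivSubtypeInter _ P))
    _ = _ := by
        rw [card_invariant_finsets]
        split_ifs <;> simp [mul_comm]

/-- Let `A` be a finite abelian group of order `N`, `R = ℂ[A]` its regular
representation (with `a ∈ A` acting on the basis `(δ_b)_{b ∈ A}` by translation,
i.e., by `Finsupp.lmapDomain ℂ ℂ (a * ·)`), and let `ρ` be the induced action of an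
element `a` of order `d` on the `k`-th exterior power `⋀^k R`. Then the trace of `ρ`
is `(−1)^{(d−1)(k/d)} C(N/d, k/d)` if `d ∣ k`, and `0` otherwise. -/
theorem stmt_17 (A : Type) [CommGroup A] [Fintype A] (k d : ℕ) (a : A)
    (hd : orderOf a = d)
    (ρ : Module.End ℂ (⋀[ℂ]^k (A →₀ ℂ) : Submodule ℂ (ExteriorAlgebra ℂ (A →₀ ℂ))))
    (hρ : ∀ v : (⋀[ℂ]^k (A →₀ ℂ) : Submodule ℂ (ExteriorAlgebra ℂ (A →₀ ℂ))),
      (ρ v : ExteriorAlgebra ℂ (A →₀ ℂ)) =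
        ExteriorAlgebra.map (Finsupp.lmapDomain ℂ ℂ (fun x => a * x)) (v : ExteriorAlgebra ℂ (A →₀ ℂ))) :
    LinearMap.trace ℂ _ ρ =
      if d ∣ k then
        (-1 : ℂ) ^ ((d - 1) * (k / d)) * (Nat.choose (Fintype.card A / d) (k / d) : ℂ)
      else 0 := by
  subst hd
  have hρ_eq : ρ = exteriorPower.map k (Finsupp.lmapDomain ℂ ℂ (a * ·)) :=
    LinearMap.ext fun v => Subtype.ext ((hρ v).trans (exteriorPower.coe_map_apply _ v).symm)
  rw [hρ_eq, trace_exteriorPower_map_mulLeft]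
end

section
/- Let A be a finite abelian group of order N, and let a ∈ A have order d. The trace of a acting on the k-th symmetric power Sym^k of the regular representation of A equals C(N/d + k/d − 1, k/d) if d divides k, and 0 otherwise. -/
/-!
The symmetric power `Sym^k ℂ[A]` has the multisets of size `k` in `A` as a basis, permuted by
translation, so the trace of `a` is the number of multisets fixed by translation by `a`. A
multiset is fixed iff its multiplicity function is constant on the cosets of `⟨a⟩`, i.e. is
pulled back from a function `g` on `A ⧸ ⟨a⟩`; every coset has `d` elements, so the multiset has
size `d * ∑ g`. Hence fixed multisets of size `k` exist only when `d ∣ k`, and then they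
correspond to multisets of size `k / d` on the `N / d` cosets.
-/

open Finset

theorem LinearMap.trace_lmapDomain {R ι : Type*} [CommSemiring R] [Fintype ι] [DecidableEq ι]
    (g : ι → ι) :
    trace R (ι →₀ R) (Finsupp.lmapDomain R R g) = #{i | g i = i} := by
  rw [trace_eq_matrix_trace R Finsupp.basisSingleOne, Matrix.trace, Finset.card_filter]
  push_cast
  refine Finset.sum_congr rfl fun i _ => ?_
  simp [LinearMap.toMatrix_apply, Finsupp.single_apply]

theorem Multiset.map_equiv_eq_self_iff {α : Type*} [DecidableEq α] (e : α ≃ α)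
    (m : Multiset α) : m.map e = m ↔ ∀ x, m.count (e x) = m.count x := by
  rw [Multiset.ext, e.surjective.forall]
  simp only [Multiset.count_map_eq_count' _ _ e.injective, eq_comm]

theorem Sym.map_equiv_eq_self_iff {α : Type*} [DecidableEq α] {n : ℕ} (e : α ≃ α)
    (s : Sym α n) :
    s.map e = s ↔ ∀ x, (s : Multiset α).count (e x) = (s : Multiset α).count x := by
  rw [← Sym.coe_inj, Sym.coe_map, Multiset.map_equiv_eq_self_iff]

theorem card_fun_mul_sum_eq {α : Type*} [Fintype α] {d : ℕ} (hd : 0 < d) (k : ℕ) :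
    Nat.card {g : α → ℕ // d * ∑ i, g i = k} =
      if d ∣ k then Nat.card (Sym α (k / d)) else 0 := by
  classical
  split_ifs with hdk
  · obtain ⟨j, rfl⟩ := hdk
    rw [Nat.mul_div_cancel_left j hd]
    exact Nat.card_congr <| (Equiv.subtypeEquivRight fun g => Nat.mul_left_cancel_iff hd).trans
      (Sym.equivNatSumOfFintype α j).symm
  · have : IsEmpty {g : α → ℕ // d * ∑ i, g i = k} := ⟨fun g => hdk ⟨_, g.2.symm⟩⟩
    exact Nat.card_of_isEmpty

theorem apply_mul_eq_of_mem_zpowers {G β : Type*} [Group G] [Finite G] {f : G → β} {a h : G}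
    (hf : ∀ x, f (a * x) = f x) (hh : h ∈ Subgroup.zpowers a) (x : G) : f (h * x) = f x := by
  obtain ⟨n, rfl⟩ : ∃ n : ℕ, a ^ n = h := mem_powers_iff_mem_zpowers.2 hh
  induction n with
  | zero => simp
  | succ n ih => rw [pow_succ', mul_assoc, hf, ih (Subgroup.npow_mem_zpowers a n)]

theorem Subgroup.index_zpowers {G : Type*} [Group G] [Finite G] (a : G) :
    (zpowers a).index = Nat.card G / orderOf a := by
  rw [← (zpowers a).card_mul_index, Nat.card_zpowers, Nat.mul_div_cancel_left _ (orderOf_pos a)]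

theorem QuotientGroup.sum_comp_mk {G M : Type*} [Group G] [Fintype G] [AddCommMonoid M]
    (H : Subgroup G) [Fintype (G ⧸ H)] (g : G ⧸ H → M) :
    ∑ x : G, g x = Nat.card H • ∑ q, g q := by
  classical
  rw [Fintype.sum_equiv H.groupEquivQuotientProdSubgroup _ (fun p => g p.1)]
  · simp [Fintype.sum_prod_type_right, Nat.card_eq_fintype_card]
  · intro x
    simp [Subgroup.groupEquivQuotientProdSubgroup]

def QuotientGroup.zpowersInvariantEquiv {G β : Type*} [CommGroup G] [Finite G] (a : G) :
    {f : G → β // ∀ x, f (a * x) = f x} ≃ (G ⧸ Subgroup.zpowers a → β) where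
  toFun f := Quotient.lift f.1 fun x y hxy => by
    simpa [mul_comm] using (apply_mul_eq_of_mem_zpowers f.2 (leftRel_apply.1 hxy) x).symm
  invFun g := ⟨fun x => g x, fun x => congrArg g <| QuotientGroup.eq.2 <| by simp⟩
  left_inv _ := rfl
  right_inv g := funext <| Quotient.ind fun _ => rfl

noncomputable def Sym.fixedMulLeftEquiv {A : Type*} [CommGroup A] [Fintype A] [DecidableEq A]
    (a : A) (k : ℕ) :
    {s : Sym A k // s.map (a * ·) = s} ≃
      {g : A ⧸ Subgroup.zpowers a → ℕ // ∑ x : A, g x = k} :=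
  ((Sym.equivNatSumOfFintype A k).subtypeEquiv (q := fun P => ∀ x, P.1 (a * x) = P.1 x)
      fun s => Sym.map_equiv_eq_self_iff (Equiv.mulLeft a) s) |>.trans <|
    (Equiv.subtypeSubtypeEquivSubtypeInter _ _).trans <|
    (Equiv.subtypeEquivRight fun _ => and_comm).trans <|
    (Equiv.subtypeSubtypeEquivSubtypeInter _ _).symm.trans <|
    (QuotientGroup.zpowersInvariantEquiv a).subtypeEquiv fun _ => Iff.rfl

/-- Let `A` be a finite abelian group of order `N` and `a ∈ A` an element of order
`d`. The `k`-th symmetric power of the regular representation `ℂ[A]` has as basis the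
multisets of `A` of cardinality `k` (i.e., `Sym A k`), on which `a` acts by
translation, i.e., by `Finsupp.lmapDomain ℂ ℂ (Sym.map (a * ·))`. The trace of this
action is `C(N/d + k/d − 1, k/d)` if `d ∣ k`, and `0` otherwise. -/
theorem stmt_18 (A : Type) [CommGroup A] [Fintype A] (k d : ℕ) (a : A)
    (hd : orderOf a = d) :
    LinearMap.trace ℂ (Sym A k →₀ ℂ)
        (Finsupp.lmapDomain ℂ ℂ (Sym.map (fun x => a * x))) =
      if d ∣ k then (Nat.choose (Fintype.card A / d + k / d - 1) (k / d) : ℂ)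
      else 0 := by
  classical
  subst hd
  rw [LinearMap.trace_lmapDomain, ← Fintype.card_subtype, ← Nat.card_eq_fintype_card,
    Nat.card_congr (Sym.fixedMulLeftEquiv a k)]
  simp_rw [QuotientGroup.sum_comp_mk, Nat.card_zpowers, smul_eq_mul]
  rw [card_fun_mul_sum_eq (orderOf_pos a)]
  split_ifs
  · rw [Nat.card_eq_fintype_card, Sym.card_sym_eq_choose, ← Nat.card_eq_fintype_card,
      ← Subgroup.index_eq_card, Subgroup.index_zpowers, Nat.card_eq_fintype_card]
  · simp
end
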